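/- (Example 4.2, verification of the forwarding conditions) Fix n ≥ 1, let A ∈ ℝ^{n×n} be the matrix with A_{i,j} = 1 if j = i−1 and 0 otherwise and b = (1,0,…,0)' ∈ ℝⁿ. Let D ⊂ ℝˡ be nonempty compact, f : D×ℝⁿ → ℝⁿ, g : D×ℝⁿ → ℝ locally Lipschitz, and suppose there are constants L₂ ≥ L₁ > 0 and ρ > 0 with max(|f(d,x)|, |g(d,x)|) ≤ L₁|x| for all d ∈ D, |x| ≤ ρ, and |f(d,x)| ≤ L₂|x| for all (d,x). Let P be symmetric positive definite, p ∈ ℝⁿ, q > 0 with P(A+bp') + (A'+pb')P negative definite and x'P(A+bp')x + x'Pf(d,x) ≤ −q|x|² for all (d,x); let a₂ ≥ a₁ > 0 with a₁²x'Px ≤ |x|² ≤ a₂²x'Px for all x; set c = −(A'+pb')^{−1}(0,…,0,1)' and assume L₁ < q·a₁·|c'b| / ((1+|c|)·a₂·|Pb|). Then for every ω, R > 0 with a₂R ≤ ρ and every K with (1+|c|)L₁a₂R/|c'b|² < K < q·a₁·R/(|Pb|·|c'b|), setting M = K|c'b|ω|Pb| / ((1+|c|)L₁), there exists δ > 0 such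 that: (i) x'P(Ax + f(d,x) + bu) < 0 for all d ∈ D, x'Px = R², |u − p'x| ≤ K|c'b|; (ii) |g(d,x) + c'f(d,x)| < K(c'b)² for all d ∈ D, x'Px ≤ R², |u − p'x| ≤ K|c'b|; (iii) z(Mg(d,x) + Mc'f(d,x) − K(c'b)ω b'Px) ≤ (MK(c'b)²ω − δ)z² − x'P((A + bp' + δI)x + f(d,x)) for all (x,z) with x'Px ≤ R², ω|z| ≤ 1 and d ∈ D. -/

import Mathlib

open Matrix MeasureTheory Set Filter

noncomputable section

/-- The `m × m` matrix with ones on the subdiagonal and zeros elsewhere. -/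
def matA (m : ℕ) : Matrix (Fin m) (Fin m) ℝ :=
  Matrix.of fun i j => if (i : ℕ) = (j : ℕ) + 1 then 1 else 0

/-- The vector `b = (1,0,…,0)'` as a plain function. -/
def vecbf (m : ℕ) : Fin m → ℝ := fun i => if (i : ℕ) = 0 then 1 else 0

/-- The vector `b = (1,0,…,0)'` in Euclidean space. -/
def vecb (m : ℕ) : EuclideanSpace ℝ (Fin m) := (WithLp.equiv 2 (Fin m → ℝ)).symm (vecbf m)

/-- View a Euclidean vector as a plain function. -/
def ef {m : ℕ} (x : EuclideanSpace ℝ (Fin m)) : Fin m → ℝ := x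

/-- Matrix-vector multiplication on Euclidean space. -/
def mulVecE {m : ℕ} (M : Matrix (Fin m) (Fin m) ℝ) (x : EuclideanSpace ℝ (Fin m)) :
    EuclideanSpace ℝ (Fin m) :=
  (WithLp.equiv 2 (Fin m → ℝ)).symm (M.mulVec (ef x))

/-- Euclidean inner product `x'y`. -/
def ip {m : ℕ} (x y : EuclideanSpace ℝ (Fin m)) : ℝ := ∑ i, x i * y i

/-- Quadratic form `x'Px`. -/
def qf {m : ℕ} (P : Matrix (Fin m) (Fin m) ℝ) (x : EuclideanSpace ℝ (Fin m)) : ℝ :=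
  ip x (mulVecE P x)

/-- The saturation function `sat(s) = s / max(1,|s|)`. -/
def sat (s : ℝ) : ℝ := s / max 1 |s|

/-- The vector `c = -(A' + pb')⁻¹ (0,…,0,1)'`. -/
def cvec (n : ℕ) (p : EuclideanSpace ℝ (Fin (n+1))) : EuclideanSpace ℝ (Fin (n+1)) :=
  (WithLp.equiv 2 (Fin (n+1) → ℝ)).symm
    (-((((matA (n+1))ᵀ + vecMulVec (ef p) (vecbf (n+1)))⁻¹).mulVec (Pi.single (Fin.last n) 1)))

/-- Condition (3.3): `x'P(Ax + f(d,x,u) + bu) < 0` whenever `d ∈ D`, `x'Px = R²` and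
`|u - p'x| ≤ K|c'b|`. -/
def Cond33 {l n : ℕ} (D : Set (EuclideanSpace ℝ (Fin l)))
    (f : EuclideanSpace ℝ (Fin l) → EuclideanSpace ℝ (Fin (n+1)) → ℝ → EuclideanSpace ℝ (Fin (n+1)))
    (P : Matrix (Fin (n+1)) (Fin (n+1)) ℝ) (p : EuclideanSpace ℝ (Fin (n+1))) (R K : ℝ) : Prop :=
  ∀ d ∈ D, ∀ x : EuclideanSpace ℝ (Fin (n+1)), ∀ u : ℝ,
    qf P x = R ^ 2 → |u - ip p x| ≤ K * |ip (cvec n p) (vecb (n+1))| →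
      ip x (mulVecE P (mulVecE (matA (n+1)) x + f d x u + u • vecb (n+1))) < 0

/-- Condition (3.4): `|g(d,x,u) + c'f(d,x,u)| < K(c'b)²` whenever `d ∈ D`, `x'Px ≤ R²` and
`|u - p'x| ≤ K|c'b|`. -/
def Cond34 {l n : ℕ} (D : Set (EuclideanSpace ℝ (Fin l)))
    (f : EuclideanSpace ℝ (Fin l) → EuclideanSpace ℝ (Fin (n+1)) → ℝ → EuclideanSpace ℝ (Fin (n+1)))
    (g : EuclideanSpace ℝ (Fin l) → EuclideanSpace ℝ (Fin (n+1)) → ℝ → ℝ)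
    (P : Matrix (Fin (n+1)) (Fin (n+1)) ℝ) (p : EuclideanSpace ℝ (Fin (n+1))) (R K : ℝ) : Prop :=
  ∀ d ∈ D, ∀ x : EuclideanSpace ℝ (Fin (n+1)), ∀ u : ℝ,
    qf P x ≤ R ^ 2 → |u - ip p x| ≤ K * |ip (cvec n p) (vecb (n+1))| →
      |g d x u + ip (cvec n p) (f d x u)| < K * (ip (cvec n p) (vecb (n+1))) ^ 2

/-- Condition (3.5). -/
def Cond35 {l n : ℕ} (D : Set (EuclideanSpace ℝ (Fin l)))
    (f : EuclideanSpace ℝ (Fin l) → EuclideanSpace ℝ (Fin (n+1)) → ℝ → EuclideanSpace ℝ (Fin (n+1)))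
    (g : EuclideanSpace ℝ (Fin l) → EuclideanSpace ℝ (Fin (n+1)) → ℝ → ℝ)
    (P : Matrix (Fin (n+1)) (Fin (n+1)) ℝ) (p : EuclideanSpace ℝ (Fin (n+1)))
    (M R K ω δ : ℝ) : Prop :=
  ∀ d ∈ D, ∀ x : EuclideanSpace ℝ (Fin (n+1)), ∀ z : ℝ,
    qf P x ≤ R ^ 2 → ω * |z| ≤ 1 →
      ∀ u : ℝ, u = ip p x - K * ip (cvec n p) (vecb (n+1)) * ω * z →
        z * (M * g d x u + M * ip (cvec n p) (f d x u)
              - K * ip (cvec n p) (vecb (n+1)) * ω * ip (vecb (n+1)) (mulVecE P x))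
          ≤ (M * K * (ip (cvec n p) (vecb (n+1))) ^ 2 * ω - δ) * z ^ 2
            - ip x (mulVecE P
                (mulVecE (matA (n+1) + vecMulVec (vecbf (n+1)) (ef p) + δ • 1) x + f d x u))

/-!
On the ellipsoid `x'Px ≤ R²` we have `‖x‖ ≤ a₂R ≤ ρ`, so the local growth bounds give
`|g + c'f| ≤ (1 + |c|)L₁‖x‖`; the lower bound on `K` is then exactly (3.4).
For (3.3), the input error `u - p'x` enters `x'P(Ax + f + bu)` only through `(u - p'x)·x'Pb`,
which the Lyapunov decay `q‖x‖² ≥ q a₁R‖x‖` on the level set `x'Px = R²` dominates by the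
upper bound on `K`.
For (3.5), both cross terms on the left are at most `s|z|‖x‖` with
`s = K|c'b|ω|Pb| = M(1 + |c|)L₁`, while the right side is at least
`(A₀ - δ)z² + (q - δ/a₁²)‖x‖²` with `A₀ = MK(c'b)²ω`. The smallness condition on `L₁` gives
`s² < A₀q`, so some `δ > 0` still has `s² ≤ (A₀ - δ)(q - δ/a₁²)`, and AM–GM
closes the estimate.
-/

open scoped Topology

section LinearAlgebra

variable {m : ℕ}

theorem ip_eq_inner (x y : EuclideanSpace ℝ (Fin m)) : ip x y = inner ℝ x y := by
  simp [ip, PiLp.inner_apply, mul_comm]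

theorem mulVecE_eq_toEuclideanLin (M : Matrix (Fin m) (Fin m) ℝ) (x : EuclideanSpace ℝ (Fin m)) :
    mulVecE M x = M.toEuclideanLin x :=
  rfl

theorem abs_ip_le (x y : EuclideanSpace ℝ (Fin m)) : |ip x y| ≤ ‖x‖ * ‖y‖ := by
  rw [ip_eq_inner]
  exact abs_real_inner_le_norm x y

theorem ip_add_right (x y z : EuclideanSpace ℝ (Fin m)) : ip x (y + z) = ip x y + ip x z := by
  simp only [ip_eq_inner, inner_add_right]

theorem ip_smul_right (a : ℝ) (x y : EuclideanSpace ℝ (Fin m)) : ip x (a • y) = a * ip x y := by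
  simp only [ip_eq_inner, real_inner_smul_right]

theorem mulVecE_add (M : Matrix (Fin m) (Fin m) ℝ) (x y : EuclideanSpace ℝ (Fin m)) :
    mulVecE M (x + y) = mulVecE M x + mulVecE M y := by
  simp only [mulVecE_eq_toEuclideanLin, map_add]

theorem mulVecE_smul (M : Matrix (Fin m) (Fin m) ℝ) (a : ℝ) (x : EuclideanSpace ℝ (Fin m)) :
    mulVecE M (a • x) = a • mulVecE M x := by
  simp only [mulVecE_eq_toEuclideanLin, map_smul]

theorem add_mulVecE (M N : Matrix (Fin m) (Fin m) ℝ) (x : EuclideanSpace ℝ (Fin m)) :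
    mulVecE (M + N) x = mulVecE M x + mulVecE N x := by
  simp only [mulVecE_eq_toEuclideanLin, map_add, LinearMap.add_apply]

theorem smul_one_mulVecE (a : ℝ) (x : EuclideanSpace ℝ (Fin m)) :
    mulVecE (a • (1 : Matrix (Fin m) (Fin m) ℝ)) x = a • x := by
  simp only [mulVecE, Matrix.smul_mulVec, Matrix.one_mulVec]
  rfl

theorem add_vecMulVec_mulVecE (A : Matrix (Fin m) (Fin m) ℝ) (p x : EuclideanSpace ℝ (Fin m)) :
    mulVecE (A + vecMulVec (vecbf m) (ef p)) x = mulVecE A x + ip p x • vecb m := by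
  rw [add_mulVecE]
  congr 1
  ext i
  simp [mulVecE, vecb, ef, ip, Matrix.mulVec, vecMulVec_apply, dotProduct, Finset.mul_sum,
    mul_comm, mul_assoc]

theorem ip_mulVecE_comm {P : Matrix (Fin m) (Fin m) ℝ} (hP : P.IsHermitian)
    (x y : EuclideanSpace ℝ (Fin m)) : ip x (mulVecE P y) = ip (mulVecE P x) y := by
  simp only [ip_eq_inner, mulVecE_eq_toEuclideanLin]
  exact ((Matrix.isSymmetric_toEuclideanLin_iff).2 hP x y).symm

theorem vecb_ne_zero [NeZero m] : vecb m ≠ 0 := by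
  intro h
  simpa [vecb, vecbf] using congrArg (fun v : EuclideanSpace ℝ (Fin m) => v 0) h

theorem mulVecE_ne_zero {P : Matrix (Fin m) (Fin m) ℝ} (hP : P.PosDef)
    {x : EuclideanSpace ℝ (Fin m)} (hx : x ≠ 0) : mulVecE P x ≠ 0 := by
  intro h
  have hpos := hP.dotProduct_mulVec_pos (x := WithLp.ofLp x) (by simpa using hx)
  have : P *ᵥ WithLp.ofLp x = 0 := by simpa [mulVecE, ef] using h
  simp [this] at hpos

end LinearAlgebra

theorem two_mul_mul_le_of_sq_le_mul {s α β t u : ℝ} (hα : 0 < α) (h : s ^ 2 ≤ α * β) :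
    2 * s * t * u ≤ α * t ^ 2 + β * u ^ 2 := by
  nlinarith [sq_nonneg (α * t - s * u), mul_nonneg (sub_nonneg.2 h) (sq_nonneg u)]

theorem exists_pos_sq_le_mul_sub {s A q a : ℝ} (hA : 0 < A) (h : s ^ 2 < A * q) :
    ∃ δ > 0, δ < A ∧ s ^ 2 ≤ (A - δ) * (q - δ / a) := by
  have hcont : Continuous fun δ : ℝ => (A - δ) * (q - δ / a) := by fun_prop
  have hmargin : ∀ᶠ δ in 𝓝 (0 : ℝ), s ^ 2 < (A - δ) * (q - δ / a) :=
    hcont.continuousAt.eventually_const_lt (by simpa using h)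
  have hlt : ∀ᶠ δ in 𝓝 (0 : ℝ), δ < A := eventually_lt_nhds hA
  obtain ⟨δ, ⟨hδm, hδA⟩, hδ⟩ :=
    (((hmargin.and hlt).filter_mono nhdsWithin_le_nhds).and self_mem_nhdsWithin).exists
      (f := 𝓝[>] (0 : ℝ))
  exact ⟨δ, hδ, hδA, hδm.le⟩

theorem pos_and_mul_lt_of_lt_div {L q a₁ a₂ β C γ : ℝ} (hL : 0 < L) (hq : 0 < q) (ha₁ : 0 < a₁)
    (ha₁₂ : a₁ ≤ a₂) (hC : 0 < C) (hγ : 0 < γ) (hβ : 0 ≤ β)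
    (h : L < q * a₁ * β / (C * a₂ * γ)) : 0 < β ∧ C * L * γ < q * β := by
  have ha₂ : 0 < a₂ := ha₁.trans_le ha₁₂
  rw [lt_div_iff₀ (by positivity)] at h
  have hβ' : 0 < β := by
    rcases hβ.eq_or_lt with rfl | hβ
    · nlinarith [mul_pos hL (mul_pos (mul_pos hC ha₂) hγ)]
    · exact hβ
  refine ⟨hβ', lt_of_mul_lt_mul_right ?_ ha₂.le⟩
  nlinarith [mul_le_mul_of_nonneg_left ha₁₂ (mul_pos hq hβ').le]

theorem sq_lt_mul_of_mul_lt {K ω b γ L M q : ℝ} (hK : 0 < K) (hω : 0 < ω) (hb : 0 < |b|)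
    (hγ : 0 < γ) (hL : 0 < L) (hsmall : L * γ < q * |b|) (hM : M * L = K * |b| * ω * γ) :
    (K * |b| * ω * γ) ^ 2 < M * K * b ^ 2 * ω * q := by
  refine lt_of_mul_lt_mul_right ?_ hL.le
  rw [← sq_abs b, show M * K * |b| ^ 2 * ω * q * L = (M * L) * (K * |b| ^ 2 * ω * q) by ring, hM]
  have hs : 0 < K * |b| * ω * γ := by positivity
  nlinarith [mul_lt_mul_of_pos_left hsmall (mul_pos hs (mul_pos (mul_pos hK hb) hω))]

section Forwarding

variable {m : ℕ} {α : Type*} {D : Set α}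
  {f : α → EuclideanSpace ℝ (Fin m) → EuclideanSpace ℝ (Fin m)} {g : α → EuclideanSpace ℝ (Fin m) → ℝ}
  {A P : Matrix (Fin m) (Fin m) ℝ} {p x : EuclideanSpace ℝ (Fin m)} {q a R : ℝ}

theorem norm_le_of_qf_le (hnorm : ‖x‖ ^ 2 ≤ a ^ 2 * qf P x) (ha : 0 ≤ a) (hR : 0 ≤ R)
    (hx : qf P x ≤ R ^ 2) : ‖x‖ ≤ a * R := by
  refine (pow_le_pow_iff_left₀ (norm_nonneg x) (mul_nonneg ha hR) two_ne_zero).1 ?_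
  rw [mul_pow]
  exact hnorm.trans (mul_le_mul_of_nonneg_left hx (sq_nonneg a))

theorem mul_le_norm_of_qf_eq (hnorm : a ^ 2 * qf P x ≤ ‖x‖ ^ 2) (ha : 0 ≤ a) (hR : 0 ≤ R)
    (hx : qf P x = R ^ 2) : a * R ≤ ‖x‖ := by
  refine (pow_le_pow_iff_left₀ (mul_nonneg ha hR) (norm_nonneg x) two_ne_zero).1 ?_
  rwa [mul_pow, ← hx]

theorem abs_add_ip_le {ρ L : ℝ} (c : EuclideanSpace ℝ (Fin m))
    (hloc : ∀ d ∈ D, ∀ x : EuclideanSpace ℝ (Fin m), ‖x‖ ≤ ρ → max ‖f d x‖ |g d x| ≤ L * ‖x‖)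
    {d : α} (hd : d ∈ D) (hx : ‖x‖ ≤ ρ) :
    |g d x + ip c (f d x)| ≤ (1 + ‖c‖) * L * ‖x‖ := by
  have h := hloc d hd x hx
  calc |g d x + ip c (f d x)| ≤ |g d x| + ‖c‖ * ‖f d x‖ :=
        (abs_add_le _ _).trans (add_le_add_right (abs_ip_le _ _) _)
    _ ≤ L * ‖x‖ + ‖c‖ * (L * ‖x‖) := by
        gcongr
        exacts [(le_max_right _ _).trans h, (le_max_left _ _).trans h]
    _ = (1 + ‖c‖) * L * ‖x‖ := by ring

theorem ip_mulVecE_neg_of_qf_eq {B : ℝ}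
    (hLyap : ∀ d ∈ D, ∀ x : EuclideanSpace ℝ (Fin m),
      ip x (mulVecE P (mulVecE (A + vecMulVec (vecbf m) (ef p)) x)) + ip x (mulVecE P (f d x))
        ≤ -q * ‖x‖ ^ 2)
    (hq : 0 < q) (ha : 0 < a) (hR : 0 < R)
    (hnorm : ∀ x, a ^ 2 * qf P x ≤ ‖x‖ ^ 2) (hB : B * ‖mulVecE P (vecb m)‖ < q * a * R) :
    ∀ d ∈ D, ∀ x : EuclideanSpace ℝ (Fin m), ∀ u : ℝ, qf P x = R ^ 2 → |u - ip p x| ≤ B →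
      ip x (mulVecE P (mulVecE A x + f d x + u • vecb m)) < 0 := by
  intro d hd x u hx hu
  have hxR : a * R ≤ ‖x‖ := mul_le_norm_of_qf_eq (hnorm x) ha.le hR.le hx
  have hx0 : 0 < ‖x‖ := (mul_pos ha hR).trans_le hxR
  have hsplit : ip x (mulVecE P (mulVecE A x + f d x + u • vecb m))
      = (ip x (mulVecE P (mulVecE (A + vecMulVec (vecbf m) (ef p)) x)) + ip x (mulVecE P (f d x)))
        + (u - ip p x) * ip x (mulVecE P (vecb m)) := by
    simp only [add_vecMulVec_mulVecE, mulVecE_add, mulVecE_smul, ip_add_right, ip_smul_right]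
    ring
  have hcross : (u - ip p x) * ip x (mulVecE P (vecb m)) ≤ B * (‖x‖ * ‖mulVecE P (vecb m)‖) := by
    refine (le_abs_self _).trans ?_
    rw [abs_mul]
    exact mul_le_mul hu (abs_ip_le _ _) (abs_nonneg _) ((abs_nonneg _).trans hu)
  have hgain : B * ‖mulVecE P (vecb m)‖ < q * ‖x‖ :=
    hB.trans_le (by rw [mul_assoc]; exact mul_le_mul_of_nonneg_left hxR hq.le)
  rw [hsplit]
  nlinarith [hLyap d hd x]

theorem cross_term_le_of_sq_le_mul {c : EuclideanSpace ℝ (Fin m)} {M κ s Lc β δ : ℝ}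
    (hLyap : ∀ d ∈ D, ∀ x : EuclideanSpace ℝ (Fin m),
      ip x (mulVecE P (mulVecE (A + vecMulVec (vecbf m) (ef p)) x)) + ip x (mulVecE P (f d x))
        ≤ -q * ‖x‖ ^ 2)
    (hP : P.IsHermitian) (ha : 0 < a) (hnorm : ∀ x, a ^ 2 * qf P x ≤ ‖x‖ ^ 2)
    (hgf : ∀ d ∈ D, ∀ x, qf P x ≤ R ^ 2 → |g d x + ip c (f d x)| ≤ Lc * ‖x‖)
    (hM : 0 ≤ M) (hMs : M * Lc = s) (hκs : |κ| * ‖mulVecE P (vecb m)‖ = s)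
    (hβ : 0 < β) (hδ : 0 ≤ δ) (hmargin : s ^ 2 ≤ β * (q - δ / a ^ 2)) :
    ∀ d ∈ D, ∀ x : EuclideanSpace ℝ (Fin m), ∀ z : ℝ, qf P x ≤ R ^ 2 →
      z * (M * g d x + M * ip c (f d x) - κ * ip (vecb m) (mulVecE P x))
        ≤ β * z ^ 2 - ip x (mulVecE P
            (mulVecE (A + vecMulVec (vecbf m) (ef p) + δ • 1) x + f d x)) := by
  intro d hd x z hx
  have hgain : z * (M * (g d x + ip c (f d x))) ≤ s * (|z| * ‖x‖) := by
    refine (le_abs_self _).trans ?_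
    rw [abs_mul, abs_mul, abs_of_nonneg hM, ← hMs]
    have := mul_le_mul_of_nonneg_left (hgf d hd x hx) hM
    nlinarith [abs_nonneg z]
  have hfeedback : -(z * (κ * ip (vecb m) (mulVecE P x))) ≤ s * (|z| * ‖x‖) := by
    refine (neg_le_abs _).trans ?_
    rw [abs_mul, abs_mul, ip_mulVecE_comm hP, ← hκs]
    have := mul_le_mul_of_nonneg_left (abs_ip_le (mulVecE P (vecb m)) x) (abs_nonneg κ)
    nlinarith [abs_nonneg z]
  have hsplit : ip x (mulVecE P (mulVecE (A + vecMulVec (vecbf m) (ef p) + δ • 1) x + f d x))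
      = ip x (mulVecE P (mulVecE (A + vecMulVec (vecbf m) (ef p)) x)) + ip x (mulVecE P (f d x))
        + δ * qf P x := by
    simp only [qf, add_mulVecE _ (δ • 1), smul_one_mulVecE, mulVecE_add, mulVecE_smul,
      ip_add_right, ip_smul_right]
    ring
  have hqf : δ * qf P x ≤ δ / a ^ 2 * ‖x‖ ^ 2 := by
    rw [div_mul_eq_mul_div, le_div_iff₀ (by positivity)]
    nlinarith [hnorm x]
  have hamgm := two_mul_mul_le_of_sq_le_mul (t := |z|) (u := ‖x‖) hβ hmargin
  rw [sq_abs] at hamgm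
  rw [hsplit]
  nlinarith [hLyap d hd x]

end Forwarding

theorem example_4_2_conditions_general (n l : ℕ)
    (D : Set (EuclideanSpace ℝ (Fin l)))
    (f : EuclideanSpace ℝ (Fin l) → EuclideanSpace ℝ (Fin (n+1)) → EuclideanSpace ℝ (Fin (n+1)))
    (g : EuclideanSpace ℝ (Fin l) → EuclideanSpace ℝ (Fin (n+1)) → ℝ)
    (L1 ρ : ℝ) (hL1 : 0 < L1)
    (hloc : ∀ d ∈ D, ∀ x : EuclideanSpace ℝ (Fin (n+1)), ‖x‖ ≤ ρ →
      max ‖f d x‖ |g d x| ≤ L1 * ‖x‖)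
    (P : Matrix (Fin (n+1)) (Fin (n+1)) ℝ) (hP : P.PosDef)
    (p : EuclideanSpace ℝ (Fin (n+1))) (q : ℝ) (hq : 0 < q)
    (hLyap : ∀ d ∈ D, ∀ x : EuclideanSpace ℝ (Fin (n+1)),
      ip x (mulVecE P (mulVecE (matA (n+1) + vecMulVec (vecbf (n+1)) (ef p)) x))
          + ip x (mulVecE P (f d x)) ≤ -q * ‖x‖ ^ 2)
    (a1 a2 : ℝ) (ha1 : 0 < a1) (ha12 : a1 ≤ a2)
    (hnorm : ∀ x : EuclideanSpace ℝ (Fin (n+1)),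
      a1 ^ 2 * qf P x ≤ ‖x‖ ^ 2 ∧ ‖x‖ ^ 2 ≤ a2 ^ 2 * qf P x)
    (hsmall : L1 < q * a1 * |ip (cvec n p) (vecb (n+1))|
        / ((1 + ‖cvec n p‖) * a2 * ‖mulVecE P (vecb (n+1))‖)) :
    ∀ ω R : ℝ, 0 < ω → 0 < R → a2 * R ≤ ρ →
    ∀ K : ℝ,
      (1 + ‖cvec n p‖) * L1 * a2 * R / (ip (cvec n p) (vecb (n+1))) ^ 2 < K →
      K < q * a1 * R / (‖mulVecE P (vecb (n+1))‖ * |ip (cvec n p) (vecb (n+1))|) →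
    ∀ M : ℝ,
      M = K * |ip (cvec n p) (vecb (n+1))| * ω * ‖mulVecE P (vecb (n+1))‖
          / ((1 + ‖cvec n p‖) * L1) →
    ∃ δ : ℝ, 0 < δ ∧
      -- (3.3)
      (∀ d ∈ D, ∀ x : EuclideanSpace ℝ (Fin (n+1)), ∀ u : ℝ,
        qf P x = R ^ 2 → |u - ip p x| ≤ K * |ip (cvec n p) (vecb (n+1))| →
        ip x (mulVecE P (mulVecE (matA (n+1)) x + f d x + u • vecb (n+1))) < 0) ∧
      -- (3.4)
      (∀ d ∈ D, ∀ x : EuclideanSpace ℝ (Fin (n+1)), ∀ u : ℝ,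
        qf P x ≤ R ^ 2 → |u - ip p x| ≤ K * |ip (cvec n p) (vecb (n+1))| →
        |g d x + ip (cvec n p) (f d x)| < K * (ip (cvec n p) (vecb (n+1))) ^ 2) ∧
      -- (3.5)
      (∀ d ∈ D, ∀ x : EuclideanSpace ℝ (Fin (n+1)), ∀ z : ℝ,
        qf P x ≤ R ^ 2 → ω * |z| ≤ 1 →
        z * (M * g d x + M * ip (cvec n p) (f d x)
              - K * ip (cvec n p) (vecb (n+1)) * ω * ip (vecb (n+1)) (mulVecE P x))
          ≤ (M * K * (ip (cvec n p) (vecb (n+1))) ^ 2 * ω - δ) * z ^ 2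
            - ip x (mulVecE P
                (mulVecE (matA (n+1) + vecMulVec (vecbf (n+1)) (ef p) + δ • 1) x + f d x))) := by
  intro ω R hω hR hρR K hKlow hKup M hM
  set c := cvec n p
  set cb := ip c (vecb (n+1))
  set γ := ‖mulVecE P (vecb (n+1))‖
  have ha₂ : 0 < a2 := ha1.trans_le ha12
  have hγ : 0 < γ := norm_pos_iff.2 (mulVecE_ne_zero hP vecb_ne_zero)
  have hLc : 0 < (1 + ‖c‖) * L1 := by positivity
  obtain ⟨hcb, hgain⟩ :=
    pos_and_mul_lt_of_lt_div hL1 hq ha1 ha12 (by positivity) hγ (abs_nonneg cb) hsmall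
  have hK : 0 < K := lt_of_le_of_lt (by positivity) hKlow
  have hMs : M * ((1 + ‖c‖) * L1) = K * |cb| * ω * γ := by rw [hM, div_mul_cancel₀ _ hLc.ne']
  have hM0 : 0 < M := by rw [hM]; positivity
  have hcb2 : 0 < cb ^ 2 := sq_abs cb ▸ pow_pos hcb 2
  obtain ⟨δ, hδ, hδA, hmargin⟩ := exists_pos_sq_le_mul_sub (a := a1 ^ 2)
    (by positivity) (sq_lt_mul_of_mul_lt hK hω hcb hγ hLc hgain hMs)
  have hxR : ∀ x, qf P x ≤ R ^ 2 → ‖x‖ ≤ a2 * R := fun x hx =>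
    norm_le_of_qf_le (hnorm x).2 ha₂.le hR.le hx
  have hgf : ∀ d ∈ D, ∀ x, qf P x ≤ R ^ 2 → |g d x + ip c (f d x)| ≤ (1 + ‖c‖) * L1 * ‖x‖ :=
    fun d hd x hx => abs_add_ip_le c hloc hd ((hxR x hx).trans hρR)
  refine ⟨δ, hδ, ?_, ?_, ?_⟩
  · refine ip_mulVecE_neg_of_qf_eq hLyap hq ha1 hR (fun x => (hnorm x).1) ?_
    rw [lt_div_iff₀ (by positivity)] at hKup
    linarith
  · intro d hd x u hx _
    calc |g d x + ip c (f d x)| ≤ (1 + ‖c‖) * L1 * ‖x‖ := hgf d hd x hx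
      _ ≤ (1 + ‖c‖) * L1 * (a2 * R) := by gcongr; exact hxR x hx
      _ < K * cb ^ 2 := by rw [← mul_assoc]; exact (div_lt_iff₀ hcb2).1 hKlow
  · intro d hd x z hx _
    exact cross_term_le_of_sq_le_mul hLyap hP.1 ha1 (fun x => (hnorm x).1) hgf hM0.le hMs
      (by rw [abs_mul, abs_mul, abs_of_pos hK, abs_of_pos hω]) (sub_pos.2 hδA) hδ.le hmargin
      d hd x z hx

/-- **Example 4.2 (verification of the forwarding conditions).** For dynamics
`ẋ = Ax + bu + f(d,x)`, `ẏ = xₙ + g(d,x)` with `u`-independent nonlinearities satisfying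
the stated linear bounds, Lyapunov condition (4.18) and the smallness condition (4.19),
for every `ω, R > 0` with `a₂R ≤ ρ` and every admissible `K`, with
`M = K|c'b|ω|Pb|/((1+|c|)L₁)`, there exists `δ > 0` such that conditions (3.3), (3.4),
(3.5) hold. -/
theorem example_4_2_conditions (n l : ℕ)
    (D : Set (EuclideanSpace ℝ (Fin l))) (hD : D.Nonempty) (hDc : IsCompact D)
    (f : EuclideanSpace ℝ (Fin l) → EuclideanSpace ℝ (Fin (n+1)) → EuclideanSpace ℝ (Fin (n+1)))
    (g : EuclideanSpace ℝ (Fin l) → EuclideanSpace ℝ (Fin (n+1)) → ℝ)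
    (hfLip : LocallyLipschitz
      (fun q : EuclideanSpace ℝ (Fin l) × EuclideanSpace ℝ (Fin (n+1)) => f q.1 q.2))
    (hgLip : LocallyLipschitz
      (fun q : EuclideanSpace ℝ (Fin l) × EuclideanSpace ℝ (Fin (n+1)) => g q.1 q.2))
    (L1 L2 ρ : ℝ) (hL1 : 0 < L1) (hL12 : L1 ≤ L2) (hρ : 0 < ρ)
    (hloc : ∀ d ∈ D, ∀ x : EuclideanSpace ℝ (Fin (n+1)), ‖x‖ ≤ ρ →
      max ‖f d x‖ |g d x| ≤ L1 * ‖x‖)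
    (hglob : ∀ d ∈ D, ∀ x : EuclideanSpace ℝ (Fin (n+1)), ‖f d x‖ ≤ L2 * ‖x‖)
    (P : Matrix (Fin (n+1)) (Fin (n+1)) ℝ) (hP : P.PosDef)
    (p : EuclideanSpace ℝ (Fin (n+1))) (q : ℝ) (hq : 0 < q)
    (hneg : (-(P * (matA (n+1) + vecMulVec (vecbf (n+1)) (ef p))
        + ((matA (n+1))ᵀ + vecMulVec (ef p) (vecbf (n+1))) * P)).PosDef)
    (hLyap : ∀ d ∈ D, ∀ x : EuclideanSpace ℝ (Fin (n+1)),
      ip x (mulVecE P (mulVecE (matA (n+1) + vecMulVec (vecbf (n+1)) (ef p)) x))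
          + ip x (mulVecE P (f d x)) ≤ -q * ‖x‖ ^ 2)
    (a1 a2 : ℝ) (ha1 : 0 < a1) (ha12 : a1 ≤ a2)
    (hnorm : ∀ x : EuclideanSpace ℝ (Fin (n+1)),
      a1 ^ 2 * qf P x ≤ ‖x‖ ^ 2 ∧ ‖x‖ ^ 2 ≤ a2 ^ 2 * qf P x)
    (hsmall : L1 < q * a1 * |ip (cvec n p) (vecb (n+1))|
        / ((1 + ‖cvec n p‖) * a2 * ‖mulVecE P (vecb (n+1))‖)) :
    ∀ ω R : ℝ, 0 < ω → 0 < R → a2 * R ≤ ρ →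
    ∀ K : ℝ,
      (1 + ‖cvec n p‖) * L1 * a2 * R / (ip (cvec n p) (vecb (n+1))) ^ 2 < K →
      K < q * a1 * R / (‖mulVecE P (vecb (n+1))‖ * |ip (cvec n p) (vecb (n+1))|) →
    ∀ M : ℝ,
      M = K * |ip (cvec n p) (vecb (n+1))| * ω * ‖mulVecE P (vecb (n+1))‖
          / ((1 + ‖cvec n p‖) * L1) →
    ∃ δ : ℝ, 0 < δ ∧
      -- (3.3)
      (∀ d ∈ D, ∀ x : EuclideanSpace ℝ (Fin (n+1)), ∀ u : ℝ,
        qf P x = R ^ 2 → |u - ip p x| ≤ K * |ip (cvec n p) (vecb (n+1))| →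
        ip x (mulVecE P (mulVecE (matA (n+1)) x + f d x + u • vecb (n+1))) < 0) ∧
      -- (3.4)
      (∀ d ∈ D, ∀ x : EuclideanSpace ℝ (Fin (n+1)), ∀ u : ℝ,
        qf P x ≤ R ^ 2 → |u - ip p x| ≤ K * |ip (cvec n p) (vecb (n+1))| →
        |g d x + ip (cvec n p) (f d x)| < K * (ip (cvec n p) (vecb (n+1))) ^ 2) ∧
      -- (3.5)
      (∀ d ∈ D, ∀ x : EuclideanSpace ℝ (Fin (n+1)), ∀ z : ℝ,
        qf P x ≤ R ^ 2 → ω * |z| ≤ 1 →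
        z * (M * g d x + M * ip (cvec n p) (f d x)
              - K * ip (cvec n p) (vecb (n+1)) * ω * ip (vecb (n+1)) (mulVecE P x))
          ≤ (M * K * (ip (cvec n p) (vecb (n+1))) ^ 2 * ω - δ) * z ^ 2
            - ip x (mulVecE P
                (mulVecE (matA (n+1) + vecMulVec (vecbf (n+1)) (ef p) + δ • 1) x + f d x))) :=
  example_4_2_conditions_general n l D f g L1 ρ hL1 hloc P hP p q hq hLyap a1 a2 ha1 ha12 hnorm
    hsmall
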